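/- arXiv:1601.03240 — 2 statements merged into one kernel-verified Lean document; each statement's English description precedes it below -/
import Mathlib

section
/- Two prenex pp-formulas φ_1(S_1) and φ_2(S_2) over the same signature are counting equivalent if and only if they are renaming equivalent. -/
structure Signature where
  symb : Type
  ar : symb → ℕ

structure Struc (σ : Signature) where
  carrier : Type
  rel : ∀ r : σ.symb, (Fin (σ.ar r) → carrier) → Prop

def IsHom {σ : Signature} (A B : Struc σ) (h : A.carrier → B.carrier) : Prop :=
  ∀ r t, A.rel r t → B.rel r (h ∘ t)

def ppSet {σ : Signature} (A : Struc σ) (S : Set A.carrier) (B : Struc σ) :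
    Set (S → B.carrier) :=
  {f | ∃ h : A.carrier → B.carrier, IsHom A B h ∧ ∀ s : S, h s = f s}

noncomputable def ppCount {σ : Signature} (A : Struc σ) (S : Set A.carrier)
    (B : Struc σ) : ℕ :=
  Nat.card (ppSet A S B)

def CountEquiv {σ : Signature} (A₁ : Struc σ) (S₁ : Set A₁.carrier)
    (A₂ : Struc σ) (S₂ : Set A₂.carrier) : Prop :=
  ∀ B : Struc σ, Finite B.carrier → ppCount A₁ S₁ B = ppCount A₂ S₂ B

def SemiCountEquiv {σ : Signature} (A₁ : Struc σ) (S₁ : Set A₁.carrier)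
    (A₂ : Struc σ) (S₂ : Set A₂.carrier) : Prop :=
  ∀ B : Struc σ, Finite B.carrier → 0 < ppCount A₁ S₁ B → 0 < ppCount A₂ S₂ B →
    ppCount A₁ S₁ B = ppCount A₂ S₂ B

def ppGraph {σ : Signature} (A : Struc σ) : SimpleGraph A.carrier where
  Adj x y := x ≠ y ∧ ∃ r t, A.rel r t ∧ (∃ i, t i = x) ∧ (∃ j, t j = y)
  symm := ⟨by
    rintro x y ⟨hxy, r, t, h, hi, hj⟩
    exact ⟨Ne.symm hxy, r, t, h, hj, hi⟩⟩
  loopless := ⟨by rintro x ⟨h, -⟩; exact h rfl⟩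

def hatStruc {σ : Signature} (A : Struc σ) (S : Set A.carrier) : Struc σ :=
  ⟨A.carrier, fun r t => A.rel r t ∧ ∃ i, ∃ s ∈ S, (ppGraph A).Reachable (t i) s⟩

def compStruc {σ : Signature} (A : Struc σ) (c : (ppGraph A).ConnectedComponent) :
    Struc σ :=
  ⟨{a : A.carrier // (ppGraph A).connectedComponentMk a = c},
   fun r t => A.rel r (fun i => (t i).1)⟩

def prodStruc {σ : Signature} (B C : Struc σ) : Struc σ :=
  ⟨B.carrier × C.carrier,
   fun r t => B.rel r (fun i => (t i).1) ∧ C.rel r (fun i => (t i).2)⟩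

def RenEquiv {σ : Signature} (A₁ : Struc σ) (S₁ : Set A₁.carrier)
    (A₂ : Struc σ) (S₂ : Set A₂.carrier) : Prop :=
  (∃ h : S₁ → S₂, Function.Surjective h ∧
     ∃ H, IsHom A₁ A₂ H ∧ ∀ s : S₁, H s = h s) ∧
  (∃ h' : S₂ → S₁, Function.Surjective h' ∧
     ∃ H, IsHom A₂ A₁ H ∧ ∀ s : S₂, H s = h' s)

/-!
Precomposing with a surjection `S₁ → S₂` that extends to a homomorphism `A₁ → A₂` injects
`φ₂(B)` into `φ₁(B)`, so renaming equivalence gives counting equivalence.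

Conversely, blow up every point of `A₂` outside a set `T` into `m` copies. A solution in the
blow-up is a solution `f` in `A₂` together with a choice of copy for each value, so
`|φᵢ(B)| = ∑_{f ∈ φᵢ(A₂)} m ^ #{a | f a ∉ T}`. Counting equivalence makes these polynomials
in `m` equal, and their constant terms count the solutions with image inside `T`. Möbius
inversion over the subsets of `A₂` then shows that `φ₁` and `φ₂` have equally many solutions
in `A₂` with image exactly `S₂`; since the inclusion `S₂ ↪ A₂` is one, some solution of `φ₁`
in `A₂` maps `S₁` onto `S₂`.
-/

open Finset

open Polynomial in
theorem card_filter_eq_of_sum_pow_eq {α γ : Type*} [Fintype α] [Fintype γ]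
    {k₁ : α → ℕ} {k₂ : γ → ℕ} (h : ∀ m, 0 < m → ∑ x, m ^ k₁ x = ∑ y, m ^ k₂ y) (j : ℕ) :
    #{x | k₁ x = j} = #{y | k₂ y = j} := by
  have hpoly : ∑ x, (X : ℤ[X]) ^ k₁ x = ∑ y, X ^ k₂ y := by
    refine eq_of_infinite_eval_eq _ _ (Set.infinite_of_not_bddAbove ?_)
    rintro ⟨b, hb⟩
    have : ((b.toNat + 1 : ℕ) : ℤ) ≤ b := hb <| by
      simp only [Set.mem_ofPred_eq, eval_finsetSum, eval_pow, eval_X]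
      exact_mod_cast h _ b.toNat.succ_pos
    omega
  simpa [coeff_X_pow, sum_boole, eq_comm] using congrArg (coeff · j) hpoly

theorem card_filter_subset_eq_sum {α β : Type*} [Fintype α] [DecidableEq β]
    (F : α → Finset β) (T : Finset β) :
    #{x | F x ⊆ T} = ∑ U ∈ T.powerset, #{x | F x = U} := by
  rw [card_eq_sum_card_fiberwise (f := F) (t := T.powerset)
    (fun x hx => mem_powerset.2 (mem_filter.1 hx).2)]
  refine sum_congr rfl fun U hU => ?_
  rw [filter_filter]
  congr 1
  exact filter_congr fun x _ => ⟨And.right, fun h => ⟨h ▸ mem_powerset.1 hU, h⟩⟩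

theorem card_filter_eq_eq_of_card_filter_subset_eq {α γ β : Type*} [Fintype α] [Fintype γ]
    [DecidableEq β] {F : α → Finset β} {G : γ → Finset β}
    (h : ∀ T, #{x | F x ⊆ T} = #{y | G y ⊆ T}) (T : Finset β) :
    #{x | F x = T} = #{y | G y = T} := by
  induction T using Finset.strongInduction with
  | H T ih =>
    have hT := h T
    rw [card_filter_subset_eq_sum, card_filter_subset_eq_sum,
      ← sum_erase_add _ _ (mem_powerset_self T), ← sum_erase_add _ _ (mem_powerset_self T),
      sum_congr rfl fun U hU => ih U <| ssubset_of_subset_of_ne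
        (mem_powerset.1 (mem_of_mem_erase hU)) (ne_of_mem_erase hU)] at hT
    exact Nat.add_left_cancel hT

theorem IsHom.comp_mem_ppSet {σ : Signature} {A B C : Struc σ} {S : Set A.carrier}
    {h : B.carrier → C.carrier} (hh : IsHom B C h) {f : S → B.carrier}
    (hf : f ∈ ppSet A S B) : h ∘ f ∈ ppSet A S C := by
  obtain ⟨g, hg, hgS⟩ := hf
  exact ⟨h ∘ g, fun r t ht => hh r (g ∘ t) (hg r t ht), fun s => congrArg h (hgS s)⟩

theorem ppSet_self_mem {σ : Signature} (A : Struc σ) (S : Set A.carrier) :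
    ((↑) : S → A.carrier) ∈ ppSet A S A :=
  ⟨id, fun _ _ ht => ht, fun _ => rfl⟩

theorem exists_surjective_restrict_of_range_eq {σ : Signature} {A₁ A₂ : Struc σ}
    {S₁ : Set A₁.carrier} {S₂ : Set A₂.carrier} {f : S₁ → A₂.carrier}
    (hf : f ∈ ppSet A₁ S₁ A₂) (hrange : Set.range f = S₂) :
    ∃ h : S₁ → S₂, Function.Surjective h ∧ ∃ H, IsHom A₁ A₂ H ∧ ∀ s : S₁, H s = h s := by
  subst hrange
  obtain ⟨H, hH, hHS⟩ := hf
  exact ⟨Set.rangeFactorization f, Set.rangeFactorization_surjective, H, hH, hHS⟩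

theorem ppCount_le_of_surjective_restrict {σ : Signature} {A₁ A₂ : Struc σ}
    {S₁ : Set A₁.carrier} {S₂ : Set A₂.carrier} [Finite S₁] {h : S₁ → S₂}
    (hsurj : Function.Surjective h) {H : A₁.carrier → A₂.carrier} (hH : IsHom A₁ A₂ H)
    (hHS : ∀ s : S₁, H s = h s) (B : Struc σ) [Finite B.carrier] :
    ppCount A₂ S₂ B ≤ ppCount A₁ S₁ B := by
  have hcomp : ∀ f : ppSet A₂ S₂ B, f.1 ∘ h ∈ ppSet A₁ S₁ B := by
    rintro ⟨f, g, hg, hgS⟩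
    exact ⟨g ∘ H, fun r t ht => hg r (H ∘ t) (hH r t ht), fun s => by simp [hHS, hgS]⟩
  refine Nat.card_le_card_of_injective (fun f => ⟨f.1 ∘ h, hcomp f⟩) fun f f' hff => ?_
  exact Subtype.ext (hsurj.injective_comp_right (congrArg Subtype.val hff))

def blowUp {σ : Signature} (B : Struc σ) (μ : B.carrier → ℕ) : Struc σ :=
  ⟨(b : B.carrier) × Fin (μ b), fun r t => B.rel r fun i => (t i).1⟩

section BlowUp

variable {σ : Signature} {A : Struc σ} {S : Set A.carrier} {B : Struc σ} {μ : B.carrier → ℕ}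

instance [Finite B.carrier] : Finite (blowUp B μ).carrier :=
  inferInstanceAs (Finite ((b : B.carrier) × Fin (μ b)))

theorem isHom_blowUp_fst : IsHom (blowUp B μ) B Sigma.fst :=
  fun _ _ ht => ht

theorem mk_mem_ppSet_blowUp (hμ : ∀ b, 0 < μ b) {f : S → B.carrier}
    (hf : f ∈ ppSet A S B) (c : ∀ a : S, Fin (μ (f a))) :
    (fun a => (⟨f a, c a⟩ : (blowUp B μ).carrier)) ∈ ppSet A S (blowUp B μ) := by
  classical
  obtain ⟨h, hh, hhS⟩ := hf
  -- off `S` any copy will do, and `hμ` provides one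
  let c' : ∀ a, Fin (μ (h a)) := fun a =>
    if ha : a ∈ S then Fin.cast (congrArg μ (hhS ⟨a, ha⟩).symm) (c ⟨a, ha⟩) else ⟨0, hμ _⟩
  refine ⟨fun a => ⟨h a, c' a⟩, fun r t ht => hh r t ht, fun s => ?_⟩
  refine Sigma.ext (hhS s) ?_
  simp only [c', dif_pos s.2]
  exact (Fin.heq_ext_iff (congrArg μ (hhS s))).2 rfl

def ppSetBlowUpEquiv (hμ : ∀ b, 0 < μ b) :
    ppSet A S (blowUp B μ) ≃ Σ f : ppSet A S B, ∀ a : S, Fin (μ (f.1 a)) where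
  toFun g := ⟨⟨Sigma.fst ∘ g.1, isHom_blowUp_fst.comp_mem_ppSet g.2⟩, fun a => (g.1 a).2⟩
  invFun p := ⟨fun a => ⟨p.1.1 a, p.2 a⟩, mk_mem_ppSet_blowUp hμ p.1.2 p.2⟩
  left_inv _ := rfl
  right_inv _ := rfl

theorem ppCount_blowUp [Fintype S] [Fintype (ppSet A S B)] (hμ : ∀ b, 0 < μ b) :
    ppCount A S (blowUp B μ) = ∑ f : ppSet A S B, ∏ a : S, μ (f.1 a) := by
  rw [ppCount, Nat.card_congr (ppSetBlowUpEquiv hμ), Nat.card_sigma]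
  simp [Nat.card_pi]

end BlowUp

namespace CountEquiv

variable {σ : Signature} {A₁ A₂ : Struc σ} {S₁ : Set A₁.carrier} {S₂ : Set A₂.carrier}

theorem card_filter_image_subset_eq (hCE : CountEquiv A₁ S₁ A₂ S₂) (B : Struc σ)
    [Finite B.carrier] [DecidableEq B.carrier] [Fintype S₁] [Fintype S₂]
    [Fintype (ppSet A₁ S₁ B)] [Fintype (ppSet A₂ S₂ B)] (T : Finset B.carrier) :
    #{f : ppSet A₁ S₁ B | univ.image f.1 ⊆ T} = #{f : ppSet A₂ S₂ B | univ.image f.1 ⊆ T} := by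
  classical
  have hpow : ∀ m, 0 < m → ∑ f : ppSet A₁ S₁ B, m ^ #{a | f.1 a ∉ T} =
      ∑ f : ppSet A₂ S₂ B, m ^ #{a | f.1 a ∉ T} := by
    intro m hm
    have hμ : ∀ b, 0 < if b ∈ T then 1 else m := fun b => by split_ifs <;> omega
    have := hCE (blowUp B fun b => if b ∈ T then 1 else m) inferInstance
    simpa only [ppCount_blowUp hμ, prod_ite, prod_const, one_pow, one_mul] using this
  have hzero : ∀ {ι : Type} [Fintype ι] (f : ι → B.carrier),
      #{a | f a ∉ T} = 0 ↔ univ.image f ⊆ T := by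
    intro ι _ f
    simp [image_subset_iff]
  simpa only [hzero] using card_filter_eq_of_sum_pow_eq hpow 0

theorem exists_surjective_restrict [Finite A₁.carrier] [Finite A₂.carrier]
    (hCE : CountEquiv A₁ S₁ A₂ S₂) :
    ∃ h : S₁ → S₂, Function.Surjective h ∧ ∃ H, IsHom A₁ A₂ H ∧ ∀ s : S₁, H s = h s := by
  classical
  have : Fintype S₁ := Fintype.ofFinite _
  have : Fintype S₂ := Fintype.ofFinite _
  have : Fintype (ppSet A₁ S₁ A₂) := Fintype.ofFinite _
  have : Fintype (ppSet A₂ S₂ A₂) := Fintype.ofFinite _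
  have himage := card_filter_eq_eq_of_card_filter_subset_eq
    (hCE.card_filter_image_subset_eq A₂) S₂.toFinset
  have hpos : 0 < #{f : ppSet A₁ S₁ A₂ | univ.image f.1 = S₂.toFinset} := by
    rw [himage, card_pos]
    refine ⟨⟨_, ppSet_self_mem A₂ S₂⟩, mem_filter.2 ⟨mem_univ _, ?_⟩⟩
    ext; simp
  obtain ⟨f, hf⟩ := card_pos.1 hpos
  refine exists_surjective_restrict_of_range_eq f.2 ?_
  simpa using congrArg (fun U : Finset A₂.carrier => (U : Set A₂.carrier)) (mem_filter.1 hf).2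

end CountEquiv

/-- Two prenex pp-formulas are counting equivalent iff they are renaming
equivalent. -/
theorem stmt9 (σ : Signature) (A₁ A₂ : Struc σ)
    (S₁ : Set A₁.carrier) (S₂ : Set A₂.carrier)
    [Finite A₁.carrier] [Finite A₂.carrier] :
    CountEquiv A₁ S₁ A₂ S₂ ↔ RenEquiv A₁ S₁ A₂ S₂ := by
  constructor
  · intro hCE
    exact ⟨hCE.exists_surjective_restrict,
      CountEquiv.exists_surjective_restrict fun B hB => (hCE B hB).symm⟩
  · rintro ⟨⟨h, hsurj, H, hH, hHS⟩, ⟨h', hsurj', H', hH', hHS'⟩⟩ B _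
    exact le_antisymm (ppCount_le_of_surjective_restrict hsurj' hH' hHS' B)
      (ppCount_le_of_surjective_restrict hsurj hH hHS B)
end

section
/- Two prenex pp-formulas (A, V) and (B, V) with the same liberal variable set V are logically equivalent (have the same satisfying assignments on every structure) if and only if their augmented structures aug(A, V) and aug(B, V) are homomorphically equivalent. -/
/-- The signature expanded by a fresh unary relation symbol for each liberal
variable in `V`. -/
def augSig (σ : Signature) (V : Type) : Signature :=
  ⟨σ.symb ⊕ V, Sum.elim σ.ar fun _ => 1⟩

/-- The augmented structure of a prenex pp-formula `(A, V)`: each new unary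
symbol `R_v` is interpreted as the singleton `{v}`. -/
def augStruc {σ : Signature} (A : Struc σ) (V : Type) (ι : V → A.carrier) :
    Struc (augSig σ V) where
  carrier := A.carrier
  rel := fun r => match r with
    | .inl r => fun t => A.rel r t
    | .inr v => fun t => t ⟨0, Nat.zero_lt_one⟩ = ι v

theorem IsHom.comp {σ : Signature} {A B C : Struc σ} {g : B.carrier → C.carrier}
    {h : A.carrier → B.carrier} (hg : IsHom B C g) (hh : IsHom A B h) : IsHom A C (g ∘ h) :=
  fun r t ht => hg r (h ∘ t) (hh r t ht)

theorem isHom_id {σ : Signature} (A : Struc σ) : IsHom A A id :=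
  fun _ _ ht => ht

theorem isHom_augStruc_iff {σ : Signature} {V : Type} {A B : Struc σ} {ιA : V → A.carrier}
    {ιB : V → B.carrier} {h : A.carrier → B.carrier} :
    IsHom (augStruc A V ιA) (augStruc B V ιB) h ↔ IsHom A B h ∧ ∀ v, h (ιA v) = ιB v := by
  refine ⟨fun hh => ⟨fun r => hh (.inl r), fun v => hh (.inr v) (fun _ => ιA v) rfl⟩, ?_⟩
  rintro ⟨hh, hv⟩ (r | v) t ht
  · exact hh r t ht
  · exact (congrArg h ht).trans (hv v)

/-- The converse direction only needs the test structure `C := B` with `f := ιB`. -/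
theorem exists_isHom_augStruc_iff {σ : Signature} {V : Type} (A B : Struc σ)
    [Finite B.carrier] (ιA : V → A.carrier) (ιB : V → B.carrier) :
    (∃ h, IsHom (augStruc A V ιA) (augStruc B V ιB) h) ↔
      ∀ C : Struc σ, Finite C.carrier → ∀ f : V → C.carrier,
        (∃ h, IsHom B C h ∧ ∀ v, h (ιB v) = f v) → ∃ h, IsHom A C h ∧ ∀ v, h (ιA v) = f v := by
  constructor
  · rintro ⟨g, hg⟩ C - f ⟨h, hh, hv⟩
    obtain ⟨hg, hgv⟩ := isHom_augStruc_iff.mp hg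
    exact ⟨h ∘ g, hh.comp hg, fun v => (congrArg h (hgv v)).trans (hv v)⟩
  · intro hext
    obtain ⟨g, hg, hgv⟩ := hext B ‹_› ιB ⟨id, isHom_id B, fun _ => rfl⟩
    exact ⟨g, isHom_augStruc_iff.mpr ⟨hg, hgv⟩⟩

theorem stmt18_general (σ : Signature) (V : Type) (A B : Struc σ)
    [Finite A.carrier] [Finite B.carrier]
    (ιA : V → A.carrier) (ιB : V → B.carrier) :
    (∀ C : Struc σ, Finite C.carrier → ∀ f : V → C.carrier,
        ((∃ h, IsHom A C h ∧ ∀ v, h (ιA v) = f v) ↔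
         (∃ h, IsHom B C h ∧ ∀ v, h (ιB v) = f v)))
      ↔ ((∃ h, IsHom (augStruc A V ιA) (augStruc B V ιB) h) ∧
         (∃ h, IsHom (augStruc B V ιB) (augStruc A V ιA) h)) := by
  rw [exists_isHom_augStruc_iff, exists_isHom_augStruc_iff]
  exact ⟨fun hequiv => ⟨fun C hC f => (hequiv C hC f).2, fun C hC f => (hequiv C hC f).1⟩,
    fun ⟨hBA, hAB⟩ C hC f => ⟨hAB C hC f, hBA C hC f⟩⟩

/-- Chandra–Merlin: two prenex pp-formulas `(A, V)` and `(B, V)` with the same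
liberal variable set are logically equivalent iff their augmented structures
are homomorphically equivalent. -/
theorem stmt18 (σ : Signature) (V : Type) (A B : Struc σ)
    [Finite A.carrier] [Finite B.carrier]
    (ιA : V → A.carrier) (ιB : V → B.carrier)
    (hA : Function.Injective ιA) (hB : Function.Injective ιB) :
    (∀ C : Struc σ, Finite C.carrier → ∀ f : V → C.carrier,
        ((∃ h, IsHom A C h ∧ ∀ v, h (ιA v) = f v) ↔
         (∃ h, IsHom B C h ∧ ∀ v, h (ιB v) = f v)))
      ↔ ((∃ h, IsHom (augStruc A V ιA) (augStruc B V ιB) h) ∧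
         (∃ h, IsHom (augStruc B V ιB) (augStruc A V ιA) h)) :=
  stmt18_general σ V A B ιA ιB
end
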